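/- arXiv:1902.07820 — 4 statements merged into one kernel-verified Lean document; each statement's English description precedes it below -/
import Mathlib

section
/- For every real σ with σ > max(ρ(A)², 1) there exists a constant C > 0 such that Tr(f^n(P̄₀)) ≤ C σⁿ for all integers n ≥ 1. (Exponential growth bound on the one-stage costs, via the spectral radius of A.) -/
/-!
Unrolling the recursion gives `fⁿ(P̄₀) = Aⁿ P̄₀ (Aⁿ)ᵀ + ∑_{k<n} Aᵏ Q (Aᵏ)ᵀ`, and for positive
semidefinite `X = Bᵀ B` one has `tr (M X Mᵀ) = ‖B Mᵀ‖² ≤ ‖M‖² tr X` in the Frobenius norm.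
Since `√σ > ρ(A)`, Gelfand's formula gives `‖Aᵏ‖ ≤ C (√σ)ᵏ`, so the `k`-th term has trace at most
`C² σᵏ` times a fixed trace, and as `σ > 1` the geometric sum is at most `σⁿ / (σ - 1)`.
-/

open Matrix

/-- The Riccati-type operator `f(X) = A X Aᵀ + Q`. -/
def fop {n : ℕ} (A Q : Matrix (Fin n) (Fin n) ℝ) (X : Matrix (Fin n) (Fin n) ℝ) :
    Matrix (Fin n) (Fin n) ℝ :=
  A * X * Aᵀ + Q

/-- The spectral radius of a real square matrix: the maximum modulus of its
(complex) eigenvalues. -/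
noncomputable def rho {n : ℕ} (A : Matrix (Fin n) (Fin n) ℝ) : ℝ :=
  sSup ((fun z : ℂ => ‖z‖) '' spectrum ℂ (A.map Complex.ofReal))

open Filter Asymptotics
open scoped MatrixOrder

attribute [local instance] Matrix.frobeniusSeminormedAddCommGroup
  Matrix.frobeniusNormedRing Matrix.frobeniusNormedAlgebra

namespace Matrix

variable {m n : Type*} [Fintype m] [Fintype n]

theorem trace_transpose_mul_self_eq_frobenius_norm_sq (N : Matrix m n ℝ) :
    (Nᵀ * N).trace = ‖N‖ ^ 2 := by
  rw [frobenius_norm_def, ← Real.rpow_natCast, ← Real.rpow_mul (by positivity)]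
  norm_num [trace, mul_apply, Finset.sum_comm (γ := m), sq]

theorem PosSemidef.exists_eq_transpose_mul_self {X : Matrix n n ℝ} (hX : X.PosSemidef) :
    ∃ B : Matrix n n ℝ, X = Bᵀ * B := by
  classical
  obtain ⟨B, hB⟩ := CStarAlgebra.nonneg_iff_eq_star_mul_self.mp hX.nonneg
  exact ⟨B, by rwa [star_eq_conjTranspose, conjTranspose_eq_transpose_of_trivial] at hB⟩

theorem PosSemidef.trace_mul_mul_transpose_le {X : Matrix n n ℝ} (hX : X.PosSemidef)
    (M : Matrix m n ℝ) : (M * X * Mᵀ).trace ≤ ‖M‖ ^ 2 * X.trace := by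
  obtain ⟨B, rfl⟩ := hX.exists_eq_transpose_mul_self
  have hconj : M * (Bᵀ * B) * Mᵀ = (B * Mᵀ)ᵀ * (B * Mᵀ) := by
    simp only [transpose_mul, transpose_transpose, Matrix.mul_assoc]
  rw [hconj, trace_transpose_mul_self_eq_frobenius_norm_sq,
    trace_transpose_mul_self_eq_frobenius_norm_sq, ← frobenius_norm_transpose M, ← mul_pow,
    mul_comm]
  exact pow_le_pow_left₀ (norm_nonneg _) (frobenius_norm_mul _ _) 2

end Matrix

theorem spectralRadius_le_ofReal_sSup_norm {A : Type*} [NormedRing A] [NormedAlgebra ℂ A]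
    [CompleteSpace A] (a : A) :
    spectralRadius ℂ a ≤ ENNReal.ofReal (sSup (norm '' spectrum ℂ a)) := by
  have hbdd : BddAbove (norm '' spectrum ℂ a) :=
    ((spectrum.isCompact a).image continuous_norm).bddAbove
  refine iSup₂_le fun k hk => ?_
  rw [← enorm_eq_nnnorm, ← ofReal_norm]
  exact ENNReal.ofReal_le_ofReal (le_csSup hbdd ⟨k, hk, rfl⟩)

theorem exists_norm_pow_le_mul_pow_of_spectralRadius_lt {A : Type*} [NormedRing A]
    [NormedAlgebra ℂ A] [CompleteSpace A] {a : A} {t : ℝ}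
    (ht : spectralRadius ℂ a < ENNReal.ofReal t) :
    ∃ C, ∀ n : ℕ, ‖a ^ n‖ ≤ C * t ^ n := by
  have ht0 : 0 < t := ENNReal.ofReal_pos.mp (pos_of_gt ht)
  have hroot : ∀ᶠ n : ℕ in atTop, ‖a ^ n‖ ^ (1 / n : ℝ) < t := by
    filter_upwards
      [(spectrum.pow_norm_pow_one_div_tendsto_nhds_spectralRadius a).eventually_lt_const ht]
      with n hn
    exact (ENNReal.ofReal_lt_ofReal_iff ht0).mp hn
  have hbigO : (fun n : ℕ => ‖a ^ n‖) =O[atTop] (fun n => t ^ n) := by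
    refine IsBigO.of_bound 1 ?_
    filter_upwards [hroot, eventually_gt_atTop 0] with n hn hn0
    rw [one_div, Real.rpow_inv_lt_iff_of_pos (norm_nonneg _) ht0.le (by positivity),
      Real.rpow_natCast] at hn
    simpa [abs_of_pos ht0] using hn.le
  obtain ⟨C, hC⟩ := (isBigO_nat_atTop_iff fun n h => absurd h (pow_ne_zero n ht0.ne')).mp hbigO
  exact ⟨C, fun n => by simpa [abs_of_pos ht0] using hC n⟩

section

variable {d : ℕ}

theorem rho_nonneg (A : Matrix (Fin d) (Fin d) ℝ) : 0 ≤ rho A :=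
  Real.sSup_nonneg <| by rintro _ ⟨z, -, rfl⟩; exact norm_nonneg z

theorem exists_norm_pow_le_mul_pow_of_rho_lt {A : Matrix (Fin d) (Fin d) ℝ} {t : ℝ}
    (ht : rho A < t) : ∃ C, ∀ n : ℕ, ‖A ^ n‖ ≤ C * t ^ n := by
  have : CompleteSpace (Matrix (Fin d) (Fin d) ℂ) := FiniteDimensional.complete ℂ _
  have ht0 : 0 < t := (rho_nonneg A).trans_lt ht
  obtain ⟨C, hC⟩ := exists_norm_pow_le_mul_pow_of_spectralRadius_lt <|
    (spectralRadius_le_ofReal_sSup_norm (A.map Complex.ofReal)).trans_lt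
      ((ENNReal.ofReal_lt_ofReal_iff ht0).mpr ht)
  refine ⟨C, fun n => ?_⟩
  rw [← frobenius_norm_map_eq (A ^ n) Complex.ofReal Complex.norm_real]
  exact (congrArg norm (map_pow Complex.ofRealHom.mapMatrix A n)).trans_le (hC n)

theorem iterate_fop (A Q X : Matrix (Fin d) (Fin d) ℝ) (n : ℕ) :
    (fop A Q)^[n] X = A ^ n * X * (A ^ n)ᵀ + ∑ k ∈ Finset.range n, A ^ k * Q * (A ^ k)ᵀ := by
  induction n with
  | zero => simp
  | succ n ih =>
    have hconj : ∀ (k : ℕ) (Y : Matrix (Fin d) (Fin d) ℝ),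
        A * (A ^ k * Y * (A ^ k)ᵀ) * Aᵀ = A ^ (k + 1) * Y * (A ^ (k + 1))ᵀ := by
      intro k Y
      simp only [pow_succ', transpose_mul, Matrix.mul_assoc]
    rw [Function.iterate_succ_apply', ih, fop, Matrix.mul_add, Matrix.add_mul, Finset.mul_sum,
      Finset.sum_mul, Finset.sum_range_succ' _ n, hconj]
    simp only [hconj, pow_zero, Matrix.one_mul, transpose_one, Matrix.mul_one, add_assoc]

theorem trace_iterate_fop_le {A Q X : Matrix (Fin d) (Fin d) ℝ} (hQ : Q.PosSemidef)
    (hX : X.PosSemidef) {c σ : ℝ} (hσ : 1 < σ) (hA : ∀ k, ‖A ^ k‖ ^ 2 ≤ c * σ ^ k) (n : ℕ) :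
    ((fop A Q)^[n] X).trace ≤ c * (X.trace + Q.trace / (σ - 1)) * σ ^ n := by
  have hc : 0 ≤ c := by simpa using (sq_nonneg _).trans (hA 0)
  have hconj : ∀ k (Y : Matrix (Fin d) (Fin d) ℝ), Y.PosSemidef →
      (A ^ k * Y * (A ^ k)ᵀ).trace ≤ c * σ ^ k * Y.trace := fun k Y hY =>
    (hY.trace_mul_mul_transpose_le _).trans
      (mul_le_mul_of_nonneg_right (hA k) hY.trace_nonneg)
  have hgeom : ∑ k ∈ Finset.range n, σ ^ k ≤ σ ^ n / (σ - 1) := by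
    rw [geom_sum_eq hσ.ne']
    gcongr
    linarith
  calc ((fop A Q)^[n] X).trace
      = (A ^ n * X * (A ^ n)ᵀ).trace + ∑ k ∈ Finset.range n, (A ^ k * Q * (A ^ k)ᵀ).trace := by
        rw [iterate_fop, trace_add, trace_sum]
    _ ≤ c * σ ^ n * X.trace + ∑ k ∈ Finset.range n, c * σ ^ k * Q.trace :=
        add_le_add (hconj n X hX) (Finset.sum_le_sum fun k _ => hconj k Q hQ)
    _ = c * σ ^ n * X.trace + c * Q.trace * ∑ k ∈ Finset.range n, σ ^ k := by
        rw [Finset.mul_sum]; congr 1; exact Finset.sum_congr rfl fun k _ => by ring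
    _ ≤ c * σ ^ n * X.trace + c * Q.trace * (σ ^ n / (σ - 1)) := by
        gcongr
        exact mul_nonneg hc hQ.trace_nonneg
    _ = c * (X.trace + Q.trace / (σ - 1)) * σ ^ n := by ring

end

/-- Exponential growth bound on the one-stage costs: for every `σ > max(ρ(A)², 1)`
there is `C > 0` with `Tr(f^n(P̄₀)) ≤ C σⁿ` for all `n ≥ 1`. -/
theorem trace_iterate_exp_bound {d : ℕ} (A Q P0 : Matrix (Fin d) (Fin d) ℝ)
    (hQ : Q.PosSemidef) (hP0 : P0.PosSemidef)
    (σ : ℝ) (hσ : max ((rho A) ^ 2) 1 < σ) :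
    ∃ C : ℝ, 0 < C ∧ ∀ n : ℕ, 1 ≤ n → ((fop A Q)^[n] P0).trace ≤ C * σ ^ n := by
  have hσ1 : 1 < σ := (le_max_right _ _).trans_lt hσ
  have hρσ : rho A < √σ :=
    (Real.lt_sqrt (rho_nonneg A)).mpr ((le_max_left _ _).trans_lt hσ)
  obtain ⟨C₁, hC₁⟩ := exists_norm_pow_le_mul_pow_of_rho_lt hρσ
  have hA : ∀ k, ‖A ^ k‖ ^ 2 ≤ C₁ ^ 2 * σ ^ k := fun k => by
    calc ‖A ^ k‖ ^ 2 ≤ (C₁ * √σ ^ k) ^ 2 := pow_le_pow_left₀ (norm_nonneg _) (hC₁ k) 2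
      _ = C₁ ^ 2 * σ ^ k := by rw [mul_pow, pow_right_comm, Real.sq_sqrt (by linarith)]
  set C := C₁ ^ 2 * (P0.trace + Q.trace / (σ - 1))
  have hC : 0 ≤ C := mul_nonneg (sq_nonneg _)
    (add_nonneg hP0.trace_nonneg (div_nonneg hQ.trace_nonneg (by linarith)))
  refine ⟨C + 1, by linarith, fun n _ => ?_⟩
  calc ((fop A Q)^[n] P0).trace ≤ C * σ ^ n := trace_iterate_fop_le hQ hP0 hσ1 hA n
    _ ≤ (C + 1) * σ ^ n := by gcongr; linarith
end

section
/- If γ ∈ [0,1) satisfies γ · ρ(A)² < 1, then the series ∑_{j=1}^∞ γ^j Tr(f^j(P̄₀)) converges (is finite). (Sufficiency direction of the summability criterion used in the proof of Theorem 1: the geometrically weighted sum of estimation error costs is bounded when (1−λ′)ρ²(A) < 1.) -/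
/-!
Unrolling the recursion gives `f^j(P̄₀) = A^j P̄₀ (A^j)ᵀ + ∑_{i<j} A^i Q (A^i)ᵀ`. By Gelfand's
formula, `‖A^j‖ ≤ C r^j` for any `r > ρ(A)`; choosing `r ≥ 1` with `γ r² < 1`, the `j`-th term of
the series is `O(j (γ r²)^j)`, which is summable. Summability of the matrix series then passes to
the traces by continuity of the trace.
-/

open Matrix

open Filter Topology Asymptotics Finset

theorem exists_one_le_lt_and_mul_sq_lt {γ ρ : ℝ} (hγ : γ < 1) (h : γ * ρ ^ 2 < 1) :
    ∃ r, 1 ≤ r ∧ ρ < r ∧ γ * r ^ 2 < 1 := by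
  have hmax : γ * max ρ 1 ^ 2 < 1 := by
    rcases le_total ρ 1 with hρ | hρ <;> simpa [hρ]
  have hnear : ∀ᶠ r in 𝓝 (max ρ 1), γ * r ^ 2 < 1 :=
    (continuous_const.mul (continuous_pow 2)).continuousAt.eventually_lt continuousAt_const hmax
  obtain ⟨r, hr, hmr⟩ := ((hnear.filter_mono nhdsWithin_le_nhds).and
    (self_mem_nhdsWithin : Set.Ioi (max ρ 1) ∈ 𝓝[>] max ρ 1)).exists
  exact ⟨r, (le_max_right _ _).trans hmr.le, (le_max_left _ _).trans_lt hmr, hr⟩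

section IterateMulMulAdd

variable {R : Type*}

theorem iterate_mul_mul_add_eq [Ring R] (a b q x : R) (n : ℕ) :
    (fun y => a * y * b + q)^[n] x = a ^ n * x * b ^ n + ∑ i ∈ range n, a ^ i * q * b ^ i := by
  induction n with
  | zero => simp
  | succ n ih =>
    rw [Function.iterate_succ_apply', ih, sum_range_succ']
    simp only [mul_add, add_mul, mul_sum, sum_mul, pow_succ', pow_mul_comm', mul_assoc, pow_zero,
      one_mul, mul_one]
    abel

variable [NormedRing R] {a b : R} {C s : ℝ}

theorem norm_iterate_mul_mul_add_le (hs : 1 ≤ s) (hab : ∀ n, ‖a ^ n‖ * ‖b ^ n‖ ≤ C * s ^ n)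
    (q x : R) (n : ℕ) :
    ‖(fun y => a * y * b + q)^[n] x‖ ≤ C * (‖x‖ + n * ‖q‖) * s ^ n := by
  have hterm : ∀ y : R, ∀ i, ‖a ^ i * y * b ^ i‖ ≤ C * s ^ i * ‖y‖ := fun y i =>
    calc ‖a ^ i * y * b ^ i‖ ≤ ‖a ^ i‖ * ‖y‖ * ‖b ^ i‖ := norm_mul₃_le
      _ = ‖a ^ i‖ * ‖b ^ i‖ * ‖y‖ := by ring
      _ ≤ C * s ^ i * ‖y‖ := mul_le_mul_of_nonneg_right (hab i) (norm_nonneg y)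
  have hC : 0 ≤ C := by simpa using (mul_nonneg (norm_nonneg _) (norm_nonneg _)).trans (hab 0)
  have hsum : ‖∑ i ∈ range n, a ^ i * q * b ^ i‖ ≤ n * (C * s ^ n * ‖q‖) :=
    calc ‖∑ i ∈ range n, a ^ i * q * b ^ i‖ ≤ ∑ i ∈ range n, C * s ^ i * ‖q‖ :=
          (norm_sum_le _ _).trans (sum_le_sum fun i _ => hterm q i)
      _ ≤ ∑ _i ∈ range n, C * s ^ n * ‖q‖ := sum_le_sum fun i hi =>
          mul_le_mul_of_nonneg_right
            (mul_le_mul_of_nonneg_left (pow_le_pow_right₀ hs (mem_range.mp hi).le) hC)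
            (norm_nonneg q)
      _ = n * (C * s ^ n * ‖q‖) := by rw [sum_const, card_range, nsmul_eq_mul]
  calc _ ≤ ‖a ^ n * x * b ^ n‖ + ‖∑ i ∈ range n, a ^ i * q * b ^ i‖ := by
        rw [iterate_mul_mul_add_eq]; exact norm_add_le _ _
    _ ≤ C * s ^ n * ‖x‖ + n * (C * s ^ n * ‖q‖) := add_le_add (hterm x n) hsum
    _ = C * (‖x‖ + n * ‖q‖) * s ^ n := by ring

theorem summable_pow_smul_iterate_mul_mul_add [NormedSpace ℝ R] [CompleteSpace R] {γ : ℝ}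
    (hγ : 0 ≤ γ) (hγs : γ * s < 1) (hs : 1 ≤ s) (hab : ∀ n, ‖a ^ n‖ * ‖b ^ n‖ ≤ C * s ^ n)
    (q x : R) : Summable fun n : ℕ => γ ^ n • (fun y => a * y * b + q)^[n] x := by
  have hγs0 : 0 ≤ γ * s := by positivity
  have hgeom : Summable fun n : ℕ => (n : ℝ) ^ 1 * (γ * s) ^ n :=
    summable_pow_mul_geometric_of_norm_lt_one 1 (by rwa [Real.norm_of_nonneg hγs0])
  have hbound := ((summable_geometric_of_lt_one hγs0 hγs).mul_left (C * ‖x‖)).add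
    (hgeom.mul_left (C * ‖q‖))
  refine hbound.of_norm_bounded fun n => ?_
  calc ‖γ ^ n • (fun y => a * y * b + q)^[n] x‖
      = γ ^ n * ‖(fun y => a * y * b + q)^[n] x‖ := by
        rw [norm_smul, Real.norm_of_nonneg (pow_nonneg hγ n)]
    _ ≤ γ ^ n * (C * (‖x‖ + n * ‖q‖) * s ^ n) := by
        gcongr; exact norm_iterate_mul_mul_add_le hs hab q x n
    _ = _ := by ring

end IterateMulMulAdd

theorem exists_norm_pow_le_of_spectralRadius_lt {A : Type*} [NormedRing A] [NormedAlgebra ℂ A]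
    [CompleteSpace A] (a : A) {r : ℝ} (hr : 0 < r) (h : spectralRadius ℂ a < ENNReal.ofReal r) :
    ∃ C, ∀ n, ‖a ^ n‖ ≤ C * r ^ n := by
  have hgelfand := spectrum.pow_norm_pow_one_div_tendsto_nhds_spectralRadius a
  have hev : ∀ᶠ n : ℕ in atTop, ‖a ^ n‖ ≤ r ^ n := by
    filter_upwards [hgelfand.eventually_lt_const h, eventually_gt_atTop 0] with n hn hn0
    rw [ENNReal.ofReal_lt_ofReal_iff hr] at hn
    have := pow_le_pow_left₀ (by positivity) hn.le n
    rwa [← Real.rpow_natCast, ← Real.rpow_mul (norm_nonneg _), one_div_mul_cancel (by positivity),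
      Real.rpow_one] at this
  have hO : (fun n => ‖a ^ n‖) =O[atTop] fun n => r ^ n :=
    IsBigO.of_bound 1 (by filter_upwards [hev] with n hn; simpa [abs_of_pos hr] using hn)
  obtain ⟨C, hC⟩ := (isBigO_nat_atTop_iff fun n hn => absurd hn (pow_pos hr n).ne').mp hO
  exact ⟨C, fun n => by simpa [abs_of_pos hr] using hC n⟩

theorem spectralRadius_map_ofReal_le_rho {d : ℕ} (A : Matrix (Fin d) (Fin d) ℝ) :
    spectralRadius ℂ (A.map Complex.ofReal) ≤ ENNReal.ofReal (rho A) :=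
  iSup₂_le fun z hz => by
    rw [← enorm_eq_nnnorm, ← ofReal_norm]
    exact ENNReal.ofReal_le_ofReal <|
      le_csSup ((Matrix.finite_spectrum _).image _).bddAbove ⟨z, hz, rfl⟩

-- The Frobenius norm is submultiplicative and invariant under transposition and complexification.
open scoped Matrix.Norms.Frobenius

theorem exists_frobenius_norm_pow_le {d : ℕ} (A : Matrix (Fin d) (Fin d) ℝ) {r : ℝ} (hr : 0 < r)
    (h : rho A < r) : ∃ C, ∀ n, ‖A ^ n‖ ≤ C * r ^ n := by
  obtain ⟨C, hC⟩ := exists_norm_pow_le_of_spectralRadius_lt (A.map Complex.ofReal) hr <|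
    (spectralRadius_map_ofReal_le_rho A).trans_lt ((ENNReal.ofReal_lt_ofReal_iff hr).mpr h)
  refine ⟨C, fun n => ?_⟩
  have := hC n
  rwa [show A.map Complex.ofReal = A.map Complex.ofRealHom from rfl, ← Matrix.map_pow,
    frobenius_norm_map_eq _ Complex.ofRealHom Complex.norm_real] at this

theorem summable_weighted_trace_general {d : ℕ} (A Q P0 : Matrix (Fin d) (Fin d) ℝ)
    (γ : ℝ) (hγ : γ ∈ Set.Ico (0 : ℝ) 1) (hstab : γ * (rho A) ^ 2 < 1) :
    Summable (fun j : ℕ => γ ^ (j + 1) * ((fop A Q)^[j + 1] P0).trace) := by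
  obtain ⟨hγ0, hγ1⟩ := hγ
  obtain ⟨r, hr1, hρr, hγr⟩ := exists_one_le_lt_and_mul_sq_lt hγ1 hstab
  obtain ⟨C, hC⟩ := exists_frobenius_norm_pow_le A (zero_lt_one.trans_le hr1) hρr
  have hAAt : ∀ n, ‖A ^ n‖ * ‖Aᵀ ^ n‖ ≤ C ^ 2 * (r ^ 2) ^ n := fun n => by
    rw [← transpose_pow, frobenius_norm_transpose, ← sq]
    calc ‖A ^ n‖ ^ 2 ≤ (C * r ^ n) ^ 2 := pow_le_pow_left₀ (norm_nonneg _) (hC n) 2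
      _ = C ^ 2 * (r ^ 2) ^ n := by ring
  have hsum : Summable fun n : ℕ => γ ^ n • (fop A Q)^[n] P0 :=
    summable_pow_smul_iterate_mul_mul_add hγ0 hγr (one_le_pow₀ hr1) hAAt Q P0
  have htr : Summable fun n : ℕ => γ ^ n * ((fop A Q)^[n] P0).trace := by
    simpa only [Function.comp_def, traceAddMonoidHom_apply, trace_smul, smul_eq_mul] using
      hsum.map (traceAddMonoidHom (Fin d) ℝ) continuous_id.matrix_trace
  exact htr.comp_injective (add_left_injective 1)

/-- Sufficiency direction of the summability criterion: if `γ ∈ [0,1)` and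
`γ ρ(A)² < 1`, then `∑_{j=1}^∞ γ^j Tr(f^j(P̄₀))` converges. -/
theorem summable_weighted_trace {d : ℕ} (A Q P0 : Matrix (Fin d) (Fin d) ℝ)
    (hQ : Q.PosSemidef) (hP0 : P0.PosSemidef)
    (γ : ℝ) (hγ : γ ∈ Set.Ico (0 : ℝ) 1) (hstab : γ * (rho A) ^ 2 < 1) :
    Summable (fun j : ℕ => γ ^ (j + 1) * ((fop A Q)^[j + 1] P0).trace) :=
  summable_weighted_trace_general A Q P0 γ hγ hstab
end

section
/- If Q is positive definite and γ > 0 satisfies γ · ρ(A)² ≥ 1, then the series ∑_{j=1}^∞ γ^j Tr(f^j(P̄₀)) diverges. (Necessity direction of the summability criterion: with non-degenerate process noise, the geometrically weighted sum of estimation error costs is unbounded when γρ²(A) ≥ 1.) -/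
/-!
Choose `ε > 0` with `ε • 1 ≤ Q` in the Loewner order. Unrolling `f` gives
`A ^ j * Q * (A ^ j)ᵀ ≤ f^[j+1] P̄₀`, so `Tr f^[j+1] P̄₀ ≥ ε ‖A ^ j‖_F ^ 2`. If `λ` is an
eigenvalue with `|λ| = ρ(A)`, then `λ ^ j` lies in the spectrum of `A ^ j`, whence
`ρ(A) ^ (2 j) ≤ ‖A ^ j‖_F ^ 2 ‖1‖_F ^ 2 = d ‖A ^ j‖_F ^ 2`. Therefore
`d γ ^ (j+1) Tr f^[j+1] P̄₀ ≥ γ ε (γ ρ(A) ^ 2) ^ j ≥ γ ε > 0`, and the terms of the series do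
not tend to zero.
-/

open Matrix

open scoped MatrixOrder

attribute [local instance] Matrix.frobeniusNormedAddCommGroup Matrix.frobeniusNormedRing
  Matrix.frobeniusNormedAlgebra

section Loewner

variable {n : Type*} [Fintype n]

lemma trace_le_trace_of_le {X Y : Matrix n n ℝ} (h : X ≤ Y) : X.trace ≤ Y.trace :=
  OrderHomClass.mono (tracePositiveLinearMap n ℝ ℝ) h

lemma transpose_conjugate_le_conjugate {X Y : Matrix n n ℝ} (h : X ≤ Y) (M : Matrix n n ℝ) :
    M * X * Mᵀ ≤ M * Y * Mᵀ := by
  simpa [star_eq_conjTranspose] using star_right_conjugate_le_conjugate h M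

lemma Matrix.PosDef.exists_pos_smul_one_le [DecidableEq n] {Q : Matrix n n ℝ} (hQ : Q.PosDef) :
    ∃ ε : ℝ, 0 < ε ∧ ε • (1 : Matrix n n ℝ) ≤ Q := by
  cases isEmpty_or_nonempty n
  · exact ⟨1, one_pos, by simp [Subsingleton.elim Q (1 • 1)]⟩
  simpa [Algebra.algebraMap_eq_smul_one] using
    (CFC.exists_pos_algebraMap_le_iff hQ.isHermitian).2 fun _ hx ↦
      hQ.isStrictlyPositive.spectrum_pos hx

lemma smul_trace_mul_transpose_le [DecidableEq n] {Q : Matrix n n ℝ} {ε : ℝ}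
    (hεQ : ε • (1 : Matrix n n ℝ) ≤ Q) (M : Matrix n n ℝ) :
    ε * (M * Mᵀ).trace ≤ (M * Q * Mᵀ).trace := by
  simpa using trace_le_trace_of_le (transpose_conjugate_le_conjugate hεQ M)

end Loewner

section Iterates

variable {d : ℕ} {A Q : Matrix (Fin d) (Fin d) ℝ}

lemma fop_mono {X Y : Matrix (Fin d) (Fin d) ℝ} (h : X ≤ Y) : fop A Q X ≤ fop A Q Y :=
  add_le_add_left (transpose_conjugate_le_conjugate h A) Q

lemma conjugate_le_fop (hQ : 0 ≤ Q) (X : Matrix (Fin d) (Fin d) ℝ) : A * X * Aᵀ ≤ fop A Q X :=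
  le_add_of_nonneg_right hQ

lemma pow_mul_mul_transpose_pow_le_iterate_fop (hQ : 0 ≤ Q) {P0 : Matrix (Fin d) (Fin d) ℝ}
    (hP0 : 0 ≤ P0) (j : ℕ) : A ^ j * Q * (A ^ j)ᵀ ≤ (fop A Q)^[j + 1] P0 := by
  induction j with
  | zero => simpa [fop] using transpose_conjugate_le_conjugate hP0 A
  | succ j ih =>
    rw [Function.iterate_succ_apply']
    calc A ^ (j + 1) * Q * (A ^ (j + 1))ᵀ = A * (A ^ j * Q * (A ^ j)ᵀ) * Aᵀ := by
          simp only [pow_succ', transpose_mul, Matrix.mul_assoc]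
      _ ≤ fop A Q (A ^ j * Q * (A ^ j)ᵀ) := conjugate_le_fop hQ _
      _ ≤ fop A Q ((fop A Q)^[j + 1] P0) := fop_mono ih

lemma smul_trace_pow_le_trace_iterate_fop {ε : ℝ} (hεQ : ε • (1 : Matrix (Fin d) (Fin d) ℝ) ≤ Q)
    (hQ : 0 ≤ Q) {P0 : Matrix (Fin d) (Fin d) ℝ} (hP0 : 0 ≤ P0) (j : ℕ) :
    ε * (A ^ j * (A ^ j)ᵀ).trace ≤ ((fop A Q)^[j + 1] P0).trace :=
  (smul_trace_mul_transpose_le hεQ _).trans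
    (trace_le_trace_of_le (pow_mul_mul_transpose_pow_le_iterate_fop hQ hP0 j))

end Iterates

section SpectralRadius

lemma frobenius_norm_sq_eq_trace_mul_transpose {n : Type*} [Fintype n] (M : Matrix n n ℝ) :
    ‖M‖ ^ 2 = (M * Mᵀ).trace := by
  rw [frobenius_norm_def, ← Real.rpow_natCast, ← Real.rpow_mul (by positivity)]
  simp [trace, mul_apply, sq]

variable {d : ℕ} (A : Matrix (Fin d) (Fin d) ℝ)

lemma exists_mem_spectrum_norm_eq_rho (h : (spectrum ℂ (A.map Complex.ofReal)).Nonempty) :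
    ∃ z ∈ spectrum ℂ (A.map Complex.ofReal), ‖z‖ = rho A :=
  ((spectrum.isCompact _).image continuous_norm).sSup_mem (h.image _)

lemma rho_sq_pow_le_card_mul_trace (h : (spectrum ℂ (A.map Complex.ofReal)).Nonempty) (m : ℕ) :
    (rho A ^ 2) ^ m ≤ d * (A ^ m * (A ^ m)ᵀ).trace := by
  obtain ⟨z, hz, hzρ⟩ := exists_mem_spectrum_norm_eq_rho A h
  have hmap : (A ^ m).map Complex.ofReal = A.map Complex.ofReal ^ m :=
    map_pow Complex.ofRealHom.mapMatrix A m
  have hzm := spectrum.norm_le_norm_mul_of_mem (spectrum.pow_mem_pow _ m hz)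
  rw [← hmap, frobenius_norm_map_eq _ _ Complex.norm_real, norm_pow] at hzm
  have hone : ‖(1 : Matrix (Fin d) (Fin d) ℂ)‖ ^ 2 = d := by
    rw [← coe_nnnorm, frobenius_nnnorm_one]
    simp
  rw [← hzρ, ← pow_mul, mul_comm 2, pow_mul, ← frobenius_norm_sq_eq_trace_mul_transpose, ← hone,
    mul_comm, ← mul_pow]
  exact pow_le_pow_left₀ (by positivity) hzm 2

end SpectralRadius

/-- Necessity direction of the summability criterion: if `Q` is positive definite and
`γ > 0` with `γ ρ(A)² ≥ 1`, then `∑_{j=1}^∞ γ^j Tr(f^j(P̄₀))` diverges. -/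
theorem not_summable_weighted_trace {d : ℕ} (A Q P0 : Matrix (Fin d) (Fin d) ℝ)
    (hQ : Q.PosDef) (hP0 : P0.PosSemidef)
    (γ : ℝ) (hγ : 0 < γ) (hstab : 1 ≤ γ * (rho A) ^ 2) :
    ¬ Summable (fun j : ℕ => γ ^ (j + 1) * ((fop A Q)^[j + 1] P0).trace) := by
  rcases (spectrum ℂ (A.map Complex.ofReal)).eq_empty_or_nonempty with hσ | hσ
  · -- only for `d = 0`, where `rho A = sSup ∅ = 0`
    norm_num [rho, hσ] at hstab
  obtain ⟨ε, hε, hεQ⟩ := hQ.exists_pos_smul_one_le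
  have hbound (m : ℕ) : γ * ε ≤ d * (γ ^ (m + 1) * ((fop A Q)^[m + 1] P0).trace) :=
    calc γ * ε ≤ γ * ε * (γ * rho A ^ 2) ^ m :=
          le_mul_of_one_le_right (by positivity) (one_le_pow₀ hstab)
      _ = γ ^ (m + 1) * ε * (rho A ^ 2) ^ m := by ring
      _ ≤ γ ^ (m + 1) * ε * (d * (A ^ m * (A ^ m)ᵀ).trace) := by
          gcongr; exact rho_sq_pow_le_card_mul_trace A hσ m
      _ = d * (γ ^ (m + 1) * (ε * (A ^ m * (A ^ m)ᵀ).trace)) := by ring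
      _ ≤ d * (γ ^ (m + 1) * ((fop A Q)^[m + 1] P0).trace) := by
          gcongr
          exact smul_trace_pow_le_trace_iterate_fop hεQ hQ.posSemidef.nonneg hP0.nonneg m
  intro hsum
  obtain ⟨m, hm⟩ := ((hsum.tendsto_atTop_zero.const_mul (d : ℝ)).eventually
    (gt_mem_nhds (by simpa using mul_pos hγ hε))).exists
  exact (hbound m).not_gt hm
end

section
/- Suppose P̄₀ ⪯ f(P̄₀) in the Loewner order, and let g : ℕ → [0,1] satisfy g(0) > g(q+1) for the given q ∈ ℕ. Then at any state (r,q) with r = q, condition (16) holds, i.e., Tr(f^{q+2}(P̄₀)) ≤ [(1−g(q+1))Tr(f^{q+2}(P̄₀)) − (1−g(0))Tr(f(P̄₀))]/(g(0)−g(q+1)); equivalently, the suboptimal policy of Proposition 1 always chooses a new transmission (action 0) at states with r = q. -/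
/-! `f` is monotone for the Loewner order, so `P̄₀ ⪯ f(P̄₀)` makes the orbit `k ↦ f^k(P̄₀)`
increasing and with it its trace. Hence `Tr f(P̄₀) ≤ Tr f^{q+2}(P̄₀)`, and condition (16) at
`r = q`, once multiplied out, reduces to `0 ≤ (1 - g 0) (Tr f^{q+2}(P̄₀) - Tr f(P̄₀))`. -/

open Matrix

open scoped MatrixOrder ComplexOrder

lemma Matrix.trace_monotone {n 𝕜 : Type*} [Fintype n] [RCLike 𝕜] :
    Monotone (trace : Matrix n n 𝕜 → 𝕜) :=
  (tracePositiveLinearMap n ℝ 𝕜).monotone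

lemma fop_monotone {n : ℕ} (A Q : Matrix (Fin n) (Fin n) ℝ) : Monotone (fop A Q) := by
  intro X Y hXY
  have h : A * X * star A ≤ A * Y * star A := star_right_conjugate_le_conjugate hXY A
  simpa only [fop, star_eq_conjTranspose, conjTranspose_eq_transpose_of_trivial,
    add_le_add_iff_right] using h

lemma trace_fop_le_trace_fop_iterate {n : ℕ} (A Q P0 : Matrix (Fin n) (Fin n) ℝ)
    (hP0 : P0 ≤ fop A Q P0) {k : ℕ} (hk : 1 ≤ k) :
    (fop A Q P0).trace ≤ ((fop A Q)^[k] P0).trace :=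
  trace_monotone (Monotone.monotone_iterate_of_le_map (fop_monotone A Q) hP0 hk)

theorem condition16_on_diagonal_general {d : ℕ} (A Q P0 : Matrix (Fin d) (Fin d) ℝ)
    (hmono : (fop A Q P0 - P0).PosSemidef)
    (g : ℕ → ℝ) (hg : ∀ r : ℕ, g r ∈ Set.Icc (0 : ℝ) 1)
    (q : ℕ) (hgq : g (q + 1) < g 0) :
    ((fop A Q)^[q + 2] P0).trace ≤
      ((1 - g (q + 1)) * ((fop A Q)^[q + 2] P0).trace -
          (1 - g 0) * (fop A Q P0).trace) / (g 0 - g (q + 1)) := by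
  have htrace := trace_fop_le_trace_fop_iterate A Q P0 hmono (k := q + 2) (by omega)
  have hg0 : 0 ≤ 1 - g 0 := sub_nonneg.2 (hg 0).2
  rw [le_div_iff₀ (sub_pos.2 hgq)]
  nlinarith [mul_nonneg hg0 (sub_nonneg.2 htrace)]

/-- At any state `(r,q)` with `r = q`, condition (16) holds, i.e. the suboptimal policy of
Proposition 1 always chooses a new transmission: assuming `P̄₀ ⪯ f(P̄₀)` and
`g(q+1) < g(0)`, we have
`Tr(f^{q+2}(P̄₀)) ≤ [(1−g(q+1))Tr(f^{q+2}(P̄₀)) − (1−g(0))Tr(f(P̄₀))]/(g(0)−g(q+1))`. -/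
theorem condition16_on_diagonal {d : ℕ} (A Q P0 : Matrix (Fin d) (Fin d) ℝ)
    (hQ : Q.PosSemidef) (hP0 : P0.PosSemidef)
    (hmono : (fop A Q P0 - P0).PosSemidef)
    (g : ℕ → ℝ) (hg : ∀ r : ℕ, g r ∈ Set.Icc (0 : ℝ) 1)
    (q : ℕ) (hgq : g (q + 1) < g 0) :
    ((fop A Q)^[q + 2] P0).trace ≤
      ((1 - g (q + 1)) * ((fop A Q)^[q + 2] P0).trace -
          (1 - g 0) * (fop A Q P0).trace) / (g 0 - g (q + 1)) :=
  condition16_on_diagonal_general A Q P0 hmono g hg q hgq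
end
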